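/- For every real α with 1 < α ≤ 2 and every real s, the series Σ_{m=0}^∞ κ₄ᵐ cos((m−1)s) converges absolutely and its sum is ≤ 0. -/

import Mathlib

open Finset Real

/-- `b₀ = (3α−2)/(2α)`. -/
noncomputable def b0 (α : ℝ) : ℝ := (3 * α - 2) / (2 * α)

/-- `b₂ = (α−2)/(2α)`. -/
noncomputable def b2 (α : ℝ) : ℝ := (α - 2) / (2 * α)

/-- `η = (3α−2)(α−2)(α−1)/(24α)`. -/
noncomputable def etaC (α : ℝ) : ℝ := (3 * α - 2) * (α - 2) * (α - 1) / (24 * α)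

/-- Generalized binomial coefficient `C(β,k) = β(β−1)⋯(β−k+1)/k!`. -/
noncomputable def genBinom (β : ℝ) (k : ℕ) : ℝ :=
  (∏ i ∈ Finset.range k, (β - i)) / (Nat.factorial k)

/-- `κ₂ⁿ(β) = (−1)ⁿ b₀^β Σ_{k=0}^{n} (b₂/b₀)^k C(β,k) C(β,n−k)`,
where `b₀, b₂` are formed from the fixed parameter `α`. -/
noncomputable def kappa2 (α β : ℝ) (n : ℕ) : ℝ :=
  (-1 : ℝ) ^ n * b0 α ^ β *
    ∑ k ∈ Finset.range (n + 1), (b2 α / b0 α) ^ k * genBinom β k * genBinom β (n - k)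

/-- `κ₄ⁿ = κ₂ⁿ(α) + η κ₂ⁿ(α+2)`. -/
noncomputable def kappa4 (α : ℝ) (n : ℕ) : ℝ :=
  kappa2 α α n + etaC α * kappa2 α (α + 2) n

/-! ### Auxiliary development -/

section GenBinomBasic

lemma genBinom_zero (β : ℝ) : genBinom β 0 = 1 := by simp [genBinom]

lemma genBinom_succ (β : ℝ) (k : ℕ) :
    genBinom β (k + 1) = genBinom β k * (β - k) / (k + 1) := by
  have hk : (Nat.factorial k : ℝ) ≠ 0 := Nat.cast_ne_zero.2 (Nat.factorial_ne_zero k)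
  have hk1 : ((k:ℝ) + 1) ≠ 0 := by positivity
  rw [genBinom, genBinom, prod_range_succ, Nat.factorial_succ]
  push_cast
  rw [div_mul_eq_mul_div, div_div, mul_comm ((k:ℝ)+1)]

lemma genBinom_shift (β : ℝ) (k : ℕ) :
    genBinom β (k + 1) = β * genBinom (β - 1) k / (k + 1) := by
  have hk : (Nat.factorial k : ℝ) ≠ 0 := Nat.cast_ne_zero.2 (Nat.factorial_ne_zero k)
  have hk1 : ((k:ℝ) + 1) ≠ 0 := by positivity
  have hp : ∏ i ∈ range k, (β - 1 - (i:ℝ)) = ∏ i ∈ range k, (β - ((i:ℕ)+1 : ℕ)) := by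
    apply prod_congr rfl; intro i _; push_cast; ring
  rw [genBinom, genBinom, prod_range_succ', Nat.factorial_succ, hp]
  push_cast
  field_simp
  ring

lemma genBinom_one (β : ℝ) : genBinom β 1 = β := by
  rw [show (1:ℕ) = 0 + 1 from rfl, genBinom_succ]; simp [genBinom_zero]

lemma genBinom_two (β : ℝ) : genBinom β 2 = β * (β - 1) / 2 := by
  rw [show (2:ℕ) = 1 + 1 from rfl, genBinom_succ, genBinom_one]; norm_num

lemma genBinom_three (β : ℝ) : genBinom β 3 = β * (β - 1) * (β - 2) / 6 := by
  rw [show (3:ℕ) = 2 + 1 from rfl, genBinom_succ, genBinom_two]; push_cast; ring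

lemma genBinom_natCast (N : ℕ) (k : ℕ) : genBinom (N : ℝ) k = (N.choose k : ℝ) := by
  induction k with
  | zero => simp [genBinom_zero]
  | succ k ih =>
    rcases le_or_gt (k+1) N with h | h
    · rw [genBinom_succ, ih]
      have hk1 : ((k:ℝ) + 1) ≠ 0 := by positivity
      rw [div_eq_iff hk1]
      have h2 : (N.choose (k+1)) * (k+1) = N.choose k * (N - k) := by
        rw [Nat.choose_succ_right_eq]
      have h3 : ((N:ℝ) - k) = ((N - k : ℕ) : ℝ) := by
        rw [Nat.cast_sub (by omega)]
      rw [h3]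
      have h4 := congrArg (Nat.cast : ℕ → ℝ) h2
      push_cast at h4
      linarith [h4]
    · rw [Nat.choose_eq_zero_of_lt h, genBinom]
      rw [Nat.cast_zero, div_eq_zero_iff]
      left
      apply Finset.prod_eq_zero (Finset.mem_range.2 (show N < k+1 by omega))
      simp

lemma genBinom_pascal (β : ℝ) (n : ℕ) :
    genBinom β (n+1) = genBinom (β-1) (n+1) + genBinom (β-1) n := by
  rw [genBinom_shift β n, genBinom_succ (β-1) n]
  have hn1 : ((n:ℝ) + 1) ≠ 0 := by positivity
  field_simp
  ring

end GenBinomBasic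

/-- The coefficients of `((1+c)z - cz²)^j`. -/
noncomputable def Wc (c : ℝ) (j n : ℕ) : ℝ :=
  if j ≤ n ∧ n ≤ 2*j then (j.choose (n-j) : ℝ) * (1+c)^(2*j-n) * (-c)^(n-j) else 0

section KeyIdentity
open Polynomial

lemma npe (m n : ℕ) (h : m % 2 = n % 2) : (-1:ℝ)^m = (-1:ℝ)^n := by
  conv_lhs => rw [← Nat.div_add_mod m 2]
  conv_rhs => rw [← Nat.div_add_mod n 2]
  rw [pow_add, pow_add, pow_mul, pow_mul]
  norm_num [h]

lemma coeff_CX_add_C_pow (a b : ℝ) (j m : ℕ) :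
    ((Polynomial.C b * Polynomial.X + Polynomial.C a) ^ j).coeff m
      = (j.choose m : ℝ) * a ^ (j - m) * b ^ m := by
  rw [add_pow, finset_sum_coeff]
  have hterm : ∀ k, ((Polynomial.C b * Polynomial.X) ^ k * (Polynomial.C a) ^ (j - k) *
      ((j.choose k : ℕ) : ℝ[X])).coeff m
      = if m = k then (j.choose k : ℝ) * a ^ (j - k) * b ^ k else 0 := by
    intro k
    have : (Polynomial.C b * Polynomial.X) ^ k * (Polynomial.C a) ^ (j - k) *
        ((j.choose k : ℕ) : ℝ[X])
        = Polynomial.C ((j.choose k : ℝ) * a ^ (j - k) * b ^ k) * Polynomial.X ^ k := by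
      simp only [mul_pow, ← Polynomial.C_pow, ← Polynomial.C_eq_natCast, Polynomial.C_mul]
      ring
    rw [this, Polynomial.coeff_C_mul, Polynomial.coeff_X_pow]
    simp [mul_ite]
  simp only [hterm]
  rw [Finset.sum_ite_eq (Finset.range (j+1)) m]
  by_cases h : m ∈ Finset.range (j + 1)
  · simp [h]
  · simp only [h, if_false]
    have : j.choose m = 0 := Nat.choose_eq_zero_of_lt (by simpa using h)
    simp [this]

lemma key_nat (c : ℝ) (N n : ℕ) :
    (-1:ℝ)^n * ∑ k ∈ range (n+1), c^k * genBinom (N:ℝ) k * genBinom (N:ℝ) (n-k)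
    = ∑ j ∈ range (n+1), (-1:ℝ)^j * genBinom (N:ℝ) j * Wc c j n := by
  simp only [genBinom_natCast]
  set P : ℝ[X] := 1 - (Polynomial.C (1+c) * Polynomial.X - Polynomial.C c * Polynomial.X^2)
    with hPdef
  have hC1c : Polynomial.C (1+c) = 1 + Polynomial.C c := by
    simp [Polynomial.C_add]
  have hfac : P = (1 - Polynomial.C c * Polynomial.X) * (1 - Polynomial.X) := by
    rw [hPdef, hC1c]; ring
  have hc1 : ∀ k, ((1 - Polynomial.C c * Polynomial.X)^N).coeff k = (N.choose k : ℝ) * (-c)^k := by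
    intro k
    have : (1 : ℝ[X]) - Polynomial.C c * Polynomial.X
        = Polynomial.C (-c) * Polynomial.X + Polynomial.C 1 := by
      simp [Polynomial.C_neg]; ring
    rw [this, coeff_CX_add_C_pow]
    simp
  have hc2 : ∀ k, ((1 - Polynomial.X : ℝ[X])^N).coeff k = (N.choose k : ℝ) * (-1)^k := by
    intro k
    have : (1 : ℝ[X]) - Polynomial.X = Polynomial.C (-1) * Polynomial.X + Polynomial.C 1 := by
      simp [Polynomial.C_neg]; ring
    rw [this, coeff_CX_add_C_pow]
    simp
  have hlhs : (P^N).coeff n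
      = (-1:ℝ)^n * ∑ k ∈ range (n+1), c^k * (N.choose k : ℝ) * (N.choose (n-k) : ℝ) := by
    rw [hfac, mul_pow, Polynomial.coeff_mul, Finset.Nat.sum_antidiagonal_eq_sum_range_succ_mk]
    rw [Finset.mul_sum]
    apply Finset.sum_congr rfl
    intro k hk
    rw [hc1, hc2]
    have hkn : k ≤ n := by simpa using Nat.lt_succ_iff.1 (Finset.mem_range.1 hk)
    have h5 : (-1:ℝ)^(n-k) * (-1:ℝ)^k = (-1:ℝ)^n := by
      rw [← pow_add, Nat.sub_add_cancel hkn]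
    rw [neg_pow c, ← h5]
    ring
  have hrhs : (P^N).coeff n = ∑ j ∈ range (N+1), (N.choose j : ℝ) * ((-1:ℝ)^j * Wc c j n) := by
    have hPv : P = (Polynomial.C (-(1+c)) * Polynomial.X + Polynomial.C c * Polynomial.X^2) + 1 := by
      rw [hPdef]; simp [Polynomial.C_neg]; ring
    rw [hPv, add_pow, finset_sum_coeff]
    apply Finset.sum_congr rfl
    intro j hj
    have hv0 : (Polynomial.C (-(1+c)) * Polynomial.X + Polynomial.C c * Polynomial.X^2)
        = (Polynomial.C c * Polynomial.X + Polynomial.C (-(1+c))) * Polynomial.X := by ring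
    have hv : (Polynomial.C (-(1+c)) * Polynomial.X + Polynomial.C c * Polynomial.X^2)^j
        = (Polynomial.C c * Polynomial.X + Polynomial.C (-(1+c)))^j * Polynomial.X^j := by
      rw [hv0, mul_pow]
    have hthis : ((Polynomial.C (-(1+c)) * Polynomial.X + Polynomial.C c * Polynomial.X^2)^j *
        1^(N-j) * ((N.choose j : ℕ) : ℝ[X])).coeff n
        = (N.choose j : ℝ) * (((Polynomial.C c * Polynomial.X + Polynomial.C (-(1+c)))^j *
            Polynomial.X^j).coeff n) := by
      rw [one_pow, mul_one, ← Polynomial.C_eq_natCast, mul_comm, Polynomial.coeff_C_mul, hv]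
    rw [hthis, Polynomial.coeff_mul_X_pow']
    congr 1
    by_cases hjn : j ≤ n
    · rw [if_pos hjn, coeff_CX_add_C_pow]
      by_cases h2j : n ≤ 2*j
      · have e1 : j - (n - j) = 2*j - n := by omega
        rw [Wc, if_pos ⟨hjn, h2j⟩, e1]
        have hneg : (-(1+c))^(2*j-n) = (-1:ℝ)^(2*j-n) * (1+c)^(2*j-n) := by
          rw [neg_pow]
        rw [hneg, neg_pow c, npe (2*j-n) ((n-j)+j) (by omega), pow_add]
        ring
      · have : j.choose (n - j) = 0 := Nat.choose_eq_zero_of_lt (by omega)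
        rw [Wc, if_neg (by tauto), this]
        simp
    · rw [if_neg hjn, Wc, if_neg (by tauto), mul_zero]
  have hWzero : ∀ j, n < j → Wc c j n = 0 := by
    intro j hj; rw [Wc, if_neg (by omega)]
  have hChooseZero : ∀ j, N < j → (N.choose j : ℝ) = 0 := by
    intro j hj; rw [Nat.choose_eq_zero_of_lt hj]; simp
  have hext : ∑ j ∈ range (N+1), (N.choose j : ℝ) * ((-1:ℝ)^j * Wc c j n)
      = ∑ j ∈ range (n+1), (-1:ℝ)^j * (N.choose j : ℝ) * Wc c j n := by
    have hh1 : ∑ j ∈ range (N+1), (N.choose j : ℝ) * ((-1:ℝ)^j * Wc c j n)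
        = ∑ j ∈ range (N+n+2), (N.choose j : ℝ) * ((-1:ℝ)^j * Wc c j n) := by
      apply Finset.sum_subset
      · apply Finset.range_subset_range.2; omega
      · intro j _ hj
        rw [hChooseZero j (by simp at hj ⊢; omega)]
        ring
    have hh2 : ∑ j ∈ range (n+1), (-1:ℝ)^j * (N.choose j : ℝ) * Wc c j n
        = ∑ j ∈ range (N+n+2), (-1:ℝ)^j * (N.choose j : ℝ) * Wc c j n := by
      apply Finset.sum_subset
      · apply Finset.range_subset_range.2; omega
      · intro j _ hj
        rw [hWzero j (by simp at hj ⊢; omega)]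
        ring
    rw [hh1, hh2]
    apply Finset.sum_congr rfl
    intro j _; ring
  rw [← hlhs, hrhs, hext]

/-- Polynomial (in `β`) representing `genBinom β k`. -/
noncomputable def gbPoly (k : ℕ) : Polynomial ℝ :=
  Polynomial.C ((Nat.factorial k : ℝ)⁻¹) *
    ∏ i ∈ Finset.range k, (Polynomial.X - Polynomial.C (i:ℝ))

lemma gbPoly_eval (β : ℝ) (k : ℕ) : (gbPoly k).eval β = genBinom β k := by
  rw [gbPoly, genBinom, div_eq_mul_inv, mul_comm]
  simp [Polynomial.eval_prod]

lemma key (β c : ℝ) (n : ℕ) :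
    (-1:ℝ)^n * ∑ k ∈ range (n+1), c^k * genBinom β k * genBinom β (n-k)
    = ∑ j ∈ range (n+1), (-1:ℝ)^j * genBinom β j * Wc c j n := by
  set Q : Polynomial ℝ :=
    (Polynomial.C ((-1:ℝ)^n) * ∑ k ∈ range (n+1), Polynomial.C (c^k) * (gbPoly k * gbPoly (n-k)))
    - ∑ j ∈ range (n+1), Polynomial.C ((-1:ℝ)^j * Wc c j n) * gbPoly j with hQ
  have heval : ∀ x : ℝ, Q.eval x
      = ((-1:ℝ)^n * ∑ k ∈ range (n+1), c^k * genBinom x k * genBinom x (n-k))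
        - ∑ j ∈ range (n+1), (-1:ℝ)^j * genBinom x j * Wc c j n := by
    intro x
    rw [hQ]
    simp only [Polynomial.eval_sub, Polynomial.eval_mul, Polynomial.eval_C,
      Polynomial.eval_finset_sum, gbPoly_eval]
    congr 1
    · congr 1
      apply Finset.sum_congr rfl
      intro k _
      ring
    · apply Finset.sum_congr rfl
      intro j _
      ring
  have hQ0 : Q = 0 := by
    apply Polynomial.eq_zero_of_infinite_isRoot
    apply Set.infinite_of_injective_forall_mem (f := fun N : ℕ => (N:ℝ)) Nat.cast_injective
    intro N
    simp only [Set.mem_setOf_eq, Polynomial.IsRoot, heval]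
    rw [sub_eq_zero]
    exact key_nat c N n
  have hfin := heval β
  rw [hQ0] at hfin
  simp only [Polynomial.eval_zero] at hfin
  linarith [hfin]

end KeyIdentity

section WcLemmas
variable {c : ℝ}

lemma Wc_nonneg (hc : c ≤ 0) (hc1 : 0 ≤ 1 + c) (j n : ℕ) : 0 ≤ Wc c j n := by
  rw [Wc]
  split
  · have h1 : (0:ℝ) ≤ -c := by linarith
    positivity
  · exact le_refl 0

lemma Wc_zero_of_lt {j n : ℕ} (h : n < j) : Wc c j n = 0 := by
  rw [Wc, if_neg (by omega)]

lemma Wc_zero_of_gt {j n : ℕ} (h : 2*j < n) : Wc c j n = 0 := by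
  rw [Wc, if_neg (by omega)]

lemma sum_Wc (hc : c ≤ 0) (hc1 : 0 ≤ 1 + c) (j : ℕ) :
    ∑ n ∈ range (2*j+1), Wc c j n = 1 := by
  have hsplit : 2*j+1 = j + (j+1) := by omega
  rw [hsplit, Finset.sum_range_add]
  have hz1 : ∑ n ∈ range j, Wc c j n = 0 := by
    apply Finset.sum_eq_zero
    intro n hn
    exact Wc_zero_of_lt (Finset.mem_range.1 hn)
  have hz2 : ∀ m ∈ range (j+1), Wc c j (j + m)
      = (-c)^m * (1+c)^(j-m) * (j.choose m : ℝ) := by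
    intro m hm
    have hm' : m ≤ j := by simpa using Nat.lt_succ_iff.1 (Finset.mem_range.1 hm)
    rw [Wc, if_pos (by omega)]
    have e1 : j + m - j = m := by omega
    have e2 : 2*j - (j+m) = j - m := by omega
    rw [e1, e2]
    ring
  rw [hz1, Finset.sum_congr rfl hz2, ← add_pow]
  norm_num

lemma sum_Wc_le (hc : c ≤ 0) (hc1 : 0 ≤ 1 + c) (j N : ℕ) :
    ∑ n ∈ range N, Wc c j n ≤ 1 := by
  have hh1 : ∑ n ∈ range N, Wc c j n ≤ ∑ n ∈ range (N + (2*j+1)), Wc c j n := by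
    apply Finset.sum_le_sum_of_subset_of_nonneg
    · exact Finset.range_subset_range.2 (by omega)
    · intro i _ _; exact Wc_nonneg hc hc1 j i
  have hh2 : ∑ n ∈ range (N + (2*j+1)), Wc c j n = ∑ n ∈ range (2*j+1), Wc c j n := by
    symm
    apply Finset.sum_subset (Finset.range_subset_range.2 (by omega))
    intro n _ hn
    exact Wc_zero_of_gt (by simp at hn; omega)
  rw [hh2, sum_Wc hc hc1 j] at hh1
  exact hh1

end WcLemmas

section SummabilityLemmas

lemma abs_genBinom_succ (β : ℝ) {k : ℕ} (hk : β ≤ k) :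
    ((k:ℝ) + 1) * |genBinom β (k+1)| = ((k:ℝ) - β) * |genBinom β k| := by
  rw [genBinom_succ, abs_div, abs_mul]
  have hh1 : |β - (k:ℝ)| = (k:ℝ) - β := by
    rw [abs_sub_comm, abs_of_nonneg (by linarith)]
  have hh2 : |((k:ℝ) + 1)| = (k:ℝ) + 1 := abs_of_nonneg (by positivity)
  rw [hh1, hh2]
  have : ((k:ℝ)+1) ≠ 0 := by positivity
  field_simp

lemma summable_abs_genBinom (β : ℝ) (hβ0 : 0 < β) (hβ4 : β ≤ 4) :
    Summable (fun k => |genBinom β k|) := by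
  have hrec : ∀ m : ℕ, β * ∑ i ∈ range m, |genBinom β (4+i)|
      = 4 * |genBinom β 4| - ((4:ℝ)+m) * |genBinom β (4+m)| := by
    intro m
    induction m with
    | zero => simp
    | succ m ih =>
      rw [Finset.sum_range_succ, mul_add, ih]
      have hk : β ≤ ((4+m : ℕ) : ℝ) := by push_cast; linarith
      have habs := abs_genBinom_succ β hk
      push_cast at habs ⊢
      have e : 4+(m+1) = (4+m)+1 := by omega
      rw [e]
      push_cast
      linarith [habs]
  have hble : ∀ m : ℕ, ∑ i ∈ range m, |genBinom β (4+i)| ≤ 4 * |genBinom β 4| / β := by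
    intro m
    rw [le_div_iff₀ hβ0, mul_comm]
    have hr := hrec m
    have hp : (0:ℝ) ≤ ((4:ℝ)+m) * |genBinom β (4+m)| := by positivity
    linarith
  have hsum : Summable (fun i => |genBinom β (4+i)|) :=
    summable_of_sum_range_le (fun n => abs_nonneg _) hble
  have hsum' : Summable (fun i => |genBinom β (i+4)|) := by
    simpa [add_comm] using hsum
  exact (summable_nat_add_iff 4).1 hsum'

lemma sum_alt_genBinom (β : ℝ) (n : ℕ) :
    ∑ j ∈ range (n+1), (-1:ℝ)^j * genBinom β j = (-1:ℝ)^n * genBinom (β-1) n := by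
  induction n with
  | zero => simp [genBinom_zero]
  | succ n ih =>
    rw [Finset.sum_range_succ, ih, genBinom_pascal β n]
    rw [pow_succ]
    ring

lemma tsum_alt_genBinom (β : ℝ) (hβ1 : 1 < β) (hβ4 : β ≤ 4) :
    ∑' j : ℕ, (-1:ℝ)^j * genBinom β j = 0 := by
  have habs : Summable (fun j => |(-1:ℝ)^j * genBinom β j|) := by
    have heq : ∀ j, |(-1:ℝ)^j * genBinom β j| = |genBinom β j| := by
      intro j; rw [abs_mul, abs_pow, abs_neg, abs_one, one_pow, one_mul]
    exact (summable_abs_genBinom β (by linarith) hβ4).congr (fun j => (heq j).symm)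
  have hsummable : Summable (fun j => (-1:ℝ)^j * genBinom β j) := by
    apply Summable.of_norm
    simp only [Real.norm_eq_abs]
    exact habs
  have hh1 : Filter.Tendsto (fun n => ∑ j ∈ range n, (-1:ℝ)^j * genBinom β j)
      Filter.atTop (nhds (∑' j : ℕ, (-1:ℝ)^j * genBinom β j)) :=
    hsummable.hasSum.tendsto_sum_nat
  have hh1' : Filter.Tendsto (fun n => ∑ j ∈ range (n+1), (-1:ℝ)^j * genBinom β j)
      Filter.atTop (nhds (∑' j : ℕ, (-1:ℝ)^j * genBinom β j)) :=
    hh1.comp (Filter.tendsto_add_atTop_nat 1)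
  have hh2 : Filter.Tendsto (fun n => ∑ j ∈ range (n+1), (-1:ℝ)^j * genBinom β j)
      Filter.atTop (nhds 0) := by
    have habs2 : Summable (fun k => |genBinom (β-1) k|) :=
      summable_abs_genBinom (β-1) (by linarith) (by linarith)
    have htend : Filter.Tendsto (fun n => |genBinom (β-1) n|) Filter.atTop (nhds 0) :=
      habs2.tendsto_atTop_zero
    apply squeeze_zero_norm _ htend
    intro n
    rw [sum_alt_genBinom]
    rw [Real.norm_eq_abs, abs_mul, abs_pow, abs_neg, abs_one, one_pow, one_mul]
  exact tendsto_nhds_unique hh1' hh2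

end SummabilityLemmas

/-! ### The `α`-specific quantities -/

/-- `c = b₂/b₀ = (α−2)/(3α−2)`. -/
noncomputable def cc (α : ℝ) : ℝ := (α-2)/(3*α-2)

/-- `μ = η b₀² = (3α−2)³(α−2)(α−1)/(96α³)`. -/
noncomputable def muC (α : ℝ) : ℝ := (3*α-2)^3*(α-2)*(α-1)/(96*α^3)

/-- `G j = (−1)ʲ (C(α,j) + μ C(α+2,j))`. -/
noncomputable def GG (α : ℝ) (j : ℕ) : ℝ :=
  (-1:ℝ)^j * genBinom α j + muC α * ((-1:ℝ)^j * genBinom (α+2) j)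

section AlphaSection
variable {α : ℝ} (h1 : 1 < α) (h2 : α ≤ 2)
include h1 h2

lemma halpha_pos : 0 < α := by linarith

lemma h3a2_pos : 0 < 3*α - 2 := by linarith

lemma hb0_pos : 0 < b0 α := div_pos (by linarith) (by linarith)

lemma hcc_nonpos : cc α ≤ 0 := by
  rw [cc, div_nonpos_iff]
  right
  constructor <;> linarith

lemma hcc_one : 0 ≤ 1 + cc α := by
  have he : 1 + cc α = (4*α-4)/(3*α-2) := by
    have h3 : (3*α-2) ≠ 0 := by intro h; nlinarith [h]
    rw [cc]
    rw [eq_div_iff h3, add_mul, div_mul_cancel₀ _ h3]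
    ring
  rw [he]
  apply div_nonneg (by linarith) (by linarith)

lemma hmu_nonpos : muC α ≤ 0 := by
  have ha : (0:ℝ) < α := by linarith
  rw [muC, div_nonpos_iff]
  right
  constructor
  · have hp1 : (0:ℝ) ≤ (3*α-2)^3 := pow_nonneg (by linarith) 3
    nlinarith [mul_nonneg (mul_nonneg hp1 (show (0:ℝ) ≤ 2-α by linarith))
      (show (0:ℝ) ≤ α-1 by linarith)]
  · positivity

lemma kappa2_rep (β : ℝ) (n : ℕ) :
    kappa2 α β n = b0 α ^ β * ∑ j ∈ range (n+1), (-1:ℝ)^j * genBinom β j * Wc (cc α) j n := by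
  have hb2 : b2 α / b0 α = cc α := by
    rw [b2, b0, cc]
    have ha : (2*α) ≠ 0 := by intro h; nlinarith [h]
    have h3 : (3*α-2) ≠ 0 := by intro h; nlinarith [h]
    field_simp
  rw [kappa2, hb2, ← key β (cc α) n]
  ring

lemma kappa4_rep (n : ℕ) :
    kappa4 α n = b0 α ^ (α : ℝ) * ∑ j ∈ range (n+1), GG α j * Wc (cc α) j n := by
  rw [kappa4, kappa2_rep h1 h2 α n, kappa2_rep h1 h2 (α+2) n]
  have hb0p := hb0_pos h1 h2
  have hpow : b0 α ^ (α+2 : ℝ) = b0 α ^ (α:ℝ) * b0 α^(2:ℕ) := by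
    rw [Real.rpow_add hb0p]
    congr 1
    rw [show ((2:ℝ)) = ((2:ℕ):ℝ) by norm_num, Real.rpow_natCast]
  have hmu_eq : etaC α * b0 α^(2:ℕ) = muC α := by
    rw [etaC, b0, muC]
    have hα : α ≠ 0 := by intro h; rw [h] at h1; norm_num at h1
    field_simp
    ring
  have hsplit : ∑ j ∈ range (n+1), GG α j * Wc (cc α) j n
      = (∑ j ∈ range (n+1), (-1:ℝ)^j * genBinom α j * Wc (cc α) j n)
        + muC α * ∑ j ∈ range (n+1), (-1:ℝ)^j * genBinom (α+2) j * Wc (cc α) j n := by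
    rw [Finset.mul_sum, ← Finset.sum_add_distrib]
    apply Finset.sum_congr rfl
    intro j _
    rw [GG]
    ring
  rw [hsplit, hpow, ← hmu_eq]
  ring

lemma gsign : ∀ j, 2 ≤ j → 0 ≤ (-1:ℝ)^j * genBinom α j := by
  intro j hj
  induction j, hj using Nat.le_induction with
  | base =>
    rw [genBinom_two]
    norm_num
    nlinarith
  | succ j hj ih =>
    have hj2 : (2:ℝ) ≤ (j:ℝ) := by exact_mod_cast hj
    have hfac : 0 ≤ ((j:ℝ) - α)/((j:ℝ)+1) :=
      div_nonneg (by linarith) (by positivity)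
    have he : (-1:ℝ)^(j+1) * genBinom α (j+1)
        = ((-1:ℝ)^j * genBinom α j) * (((j:ℝ)-α)/((j:ℝ)+1)) := by
      rw [genBinom_succ, pow_succ]
      field_simp
      ring
    rw [he]
    exact mul_nonneg ih hfac

lemma GG_two_nonneg : 0 ≤ GG α 2 := by
  have hα : α ≠ 0 := by intro h; rw [h] at h1; norm_num at h1
  have hbr : (0:ℝ) ≤ 27*α^6 - 27*α^5 - 30*α^4 + 136*α^3 + 64*α^2 - 112*α + 32 := by
    nlinarith [mul_nonneg (mul_nonneg (sub_nonneg.2 h1.le) (sub_nonneg.2 h1.le)) (sub_nonneg.2 h2),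
      pow_pos (show (0:ℝ) < α by linarith) 4, pow_pos (show (0:ℝ) < α by linarith) 3,
      sq_nonneg (α-1), sq_nonneg (α*(α-1)), sq_nonneg (α^2*(α-1)), sq_nonneg ((α-1)*(2-α)),
      sq_nonneg (α^2-α-1)]
  have hnum : (0:ℝ) ≤ 96*α^4*(α-1) + (3*α-2)^3*(α-2)*(α-1)*(α+2)*(α+1) := by
    nlinarith [mul_nonneg (sub_nonneg.2 h1.le) hbr]
  have heq : GG α 2 = (96*α^4*(α-1) + (3*α-2)^3*(α-2)*(α-1)*(α+2)*(α+1))/(192*α^3) := by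
    rw [GG, genBinom_two, genBinom_two, muC]
    field_simp
    ring
  rw [heq]
  positivity

lemma GG_three_nonneg : 0 ≤ GG α 3 := by
  have hmu := hmu_nonpos h1 h2
  have ht1 : (0:ℝ) ≤ -(α*(α-1)*(α-2)/6) := by
    nlinarith [mul_nonneg (mul_nonneg (show (0:ℝ) ≤ α by linarith)
      (show (0:ℝ) ≤ α-1 by linarith)) (show (0:ℝ) ≤ 2-α by linarith)]
  have ht2 : (0:ℝ) ≤ -(muC α * ((α+2)*(α+1)*α/6)) := by
    have hpos : (0:ℝ) ≤ (α+2)*(α+1)*α/6 := by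
      have ha : (0:ℝ) < α := by linarith
      positivity
    nlinarith [mul_nonneg (neg_nonneg.2 hmu) hpos]
  have heq : GG α 3 = -(α*(α-1)*(α-2)/6) + -(muC α * ((α+2)*(α+1)*α/6)) := by
    rw [GG, genBinom_three, genBinom_three]
    ring
  rw [heq]
  linarith

lemma bracket_nonneg : 0 ≤ (2-α)*(3-α) + muC α * ((α+2)*(α+1)) := by
  have hα : α ≠ 0 := by intro h; rw [h] at h1; norm_num at h1
  have h96 : (0:ℝ) ≤ 96*α^3*(2-α)*(3-α) + (3*α-2)^3*(α-2)*(α-1)*(α+2)*(α+1) := by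
    have hq : (0:ℝ) ≤ 27*α^5+54*α^4+105*α^3-14*α^2+28*α-8 := by
      nlinarith [pow_pos (show (0:ℝ) < α by linarith) 5, pow_pos (show (0:ℝ) < α by linarith) 4,
        pow_pos (show (0:ℝ) < α by linarith) 3, sq_nonneg α]
    nlinarith [mul_nonneg (sq_nonneg (2-α)) hq]
  have heq : (2-α)*(3-α) + muC α * ((α+2)*(α+1))
      = (96*α^3*(2-α)*(3-α) + (3*α-2)^3*(α-2)*(α-1)*(α+2)*(α+1))/(96*α^3) := by
    rw [muC]
    field_simp
  rw [heq]
  positivity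

lemma GG_nonneg : ∀ j, 2 ≤ j → 0 ≤ GG α j := by
  intro j hj
  rcases Nat.lt_or_ge j 4 with h4 | h4
  · interval_cases j
    · exact GG_two_nonneg h1 h2
    · exact GG_three_nonneg h1 h2
  · obtain ⟨m, rfl, hm⟩ : ∃ m, j = m + 2 ∧ 2 ≤ m := ⟨j - 2, by omega, by omega⟩
    have hm2 : (2:ℝ) ≤ (m:ℝ) := by exact_mod_cast hm
    have hm1ne : ((m:ℝ)+1) ≠ 0 := by positivity
    have hm2ne : ((m:ℝ)+2) ≠ 0 := by positivity
    -- genBinom α (m+2)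
    have hgb : genBinom α (m+2) = genBinom α m * (α-(m:ℝ)) * (α-((m:ℝ)+1))
        / (((m:ℝ)+1)*((m:ℝ)+2)) := by
      rw [show m+2 = (m+1)+1 from rfl, genBinom_succ, genBinom_succ]
      push_cast
      rw [div_mul_eq_mul_div, div_div]
      ring_nf
    -- genBinom (α+2) (m+2)
    have hgb2 : genBinom (α+2) (m+2) = (α+2)*(α+1)/(((m:ℝ)+2)*((m:ℝ)+1)) * genBinom α m := by
      have e1 := genBinom_shift (α+2) (m+1)
      have e2 := genBinom_shift (α+1) m
      rw [show α+2-1 = α+1 by ring] at e1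
      rw [show α+1-1 = α by ring] at e2
      rw [show m+2 = (m+1)+1 from rfl, e1, e2]
      push_cast
      field_simp
      ring
    have hrepr : GG α (m+2) = ((-1:ℝ)^m * genBinom α m) *
        ((((m:ℝ)-α)*(((m:ℝ)+1)-α) + muC α * ((α+2)*(α+1))) / (((m:ℝ)+1)*((m:ℝ)+2))) := by
      rw [GG, hgb, hgb2, pow_add]
      set g := genBinom α m with hgdef
      field_simp
      ring
    rw [hrepr]
    apply mul_nonneg (gsign h1 h2 m hm)
    apply div_nonneg _ (by positivity)
    have hmono : (2-α)*(3-α) ≤ ((m:ℝ)-α)*(((m:ℝ)+1)-α) := by nlinarith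
    have hbr := bracket_nonneg h1 h2
    linarith

lemma GG_abs_summable : Summable (fun j => |GG α j|) := by
  have hb : ∀ j, |GG α j| ≤ |genBinom α j| + |muC α| * |genBinom (α+2) j| := by
    intro j
    rw [GG]
    calc |(-1:ℝ)^j * genBinom α j + muC α * ((-1:ℝ)^j * genBinom (α+2) j)|
        ≤ |(-1:ℝ)^j * genBinom α j| + |muC α * ((-1:ℝ)^j * genBinom (α+2) j)| := abs_add_le _ _
      _ = |genBinom α j| + |muC α| * |genBinom (α+2) j| := by
          rw [abs_mul, abs_mul, abs_mul, abs_pow, abs_neg, abs_one, one_pow, one_mul, one_mul]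
  apply Summable.of_nonneg_of_le (fun j => abs_nonneg _) hb
  exact (summable_abs_genBinom α (by linarith) (by linarith)).add
    ((summable_abs_genBinom (α+2) (by linarith) (by linarith)).mul_left |muC α|)

lemma GG_summable : Summable (GG α) := by
  apply Summable.of_norm
  simp only [Real.norm_eq_abs]
  exact GG_abs_summable h1 h2

lemma GG_tsum_zero : ∑' j, GG α j = 0 := by
  have hs1 : Summable (fun j => (-1:ℝ)^j * genBinom α j) := by
    apply Summable.of_norm
    simp only [Real.norm_eq_abs]
    have heq : ∀ j, |(-1:ℝ)^j * genBinom α j| = |genBinom α j| := by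
      intro j; rw [abs_mul, abs_pow, abs_neg, abs_one, one_pow, one_mul]
    exact (summable_abs_genBinom α (by linarith) (by linarith)).congr (fun j => (heq j).symm)
  have hs2 : Summable (fun j => (-1:ℝ)^j * genBinom (α+2) j) := by
    apply Summable.of_norm
    simp only [Real.norm_eq_abs]
    have heq : ∀ j, |(-1:ℝ)^j * genBinom (α+2) j| = |genBinom (α+2) j| := by
      intro j; rw [abs_mul, abs_pow, abs_neg, abs_one, one_pow, one_mul]
    exact (summable_abs_genBinom (α+2) (by linarith) (by linarith)).congr
      (fun j => (heq j).symm)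
  have : ∑' j, GG α j = (∑' j, (-1:ℝ)^j * genBinom α j)
      + muC α * ∑' j, (-1:ℝ)^j * genBinom (α+2) j := by
    rw [← tsum_mul_left, ← Summable.tsum_add hs1 (hs2.mul_left (muC α))]
    rfl
  rw [this, tsum_alt_genBinom α (by linarith) (by linarith),
    tsum_alt_genBinom (α+2) (by linarith) (by linarith)]
  ring

lemma GG_head_nonneg : 0 ≤ GG α 0 - cc α * GG α 1 := by
  have hα : α ≠ 0 := by intro h; rw [h] at h1; norm_num at h1
  have h3 : (3*α-2) ≠ 0 := by intro h; nlinarith [h]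
  have hE : (0:ℝ) ≤ 96*α^3*(3*α-2) + (3*α-2)^4*(α-2)*(α-1) + 96*α^4*(α-2)
      + (α-2)^2*(3*α-2)^3*(α-1)*(α+2) := by
    have hq : (0:ℝ) ≤ 27*α^6 - 27*α^5 - 246*α^4 + 1192*α^3 - 1088*α^2 + 528*α - 96 := by
      nlinarith [sq_nonneg (α-1), sq_nonneg (α-2), sq_nonneg (α^2-α), sq_nonneg (α^2-2*α),
        sq_nonneg (α^3-α^2), sq_nonneg α, mul_nonneg (sub_nonneg.2 h1.le) (sub_nonneg.2 h2),
        pow_pos (show (0:ℝ) < α by linarith) 3]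
    nlinarith [mul_nonneg (sub_nonneg.2 h1.le) hq]
  have heq : GG α 0 - cc α * GG α 1
      = (96*α^3*(3*α-2) + (3*α-2)^4*(α-2)*(α-1) + 96*α^4*(α-2)
          + (α-2)^2*(3*α-2)^3*(α-1)*(α+2)) / (96*α^3*(3*α-2)) := by
    rw [GG, GG, genBinom_zero, genBinom_zero, genBinom_one, genBinom_one, cc, muC]
    field_simp
    ring
  rw [heq]
  have hden : (0:ℝ) < 96*α^3*(3*α-2) :=
    mul_pos (mul_pos (by norm_num) (pow_pos (show (0:ℝ) < α by linarith) 3)) (by linarith)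
  exact div_nonneg hE hden.le

end AlphaSection

/-- For `1 < α ≤ 2` and any real `s`, the series `Σ κ₄ᵐ cos((m−1)s)` converges absolutely
and its sum is `≤ 0`. -/
theorem kappa4_cos_series_nonpos (α : ℝ) (h1 : 1 < α) (h2 : α ≤ 2) (s : ℝ) :
    Summable (fun m : ℕ => |kappa4 α m * Real.cos (((m : ℝ) - 1) * s)|) ∧
    (∑' m : ℕ, kappa4 α m * Real.cos (((m : ℝ) - 1) * s)) ≤ 0 := by
  have hc := hcc_nonpos h1 h2
  have hc1 := hcc_one h1 h2
  have hb0p := hb0_pos h1 h2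
  have hb0r : (0:ℝ) < b0 α ^ (α:ℝ) := Real.rpow_pos_of_pos hb0p α
  have hGabs := GG_abs_summable h1 h2
  set c := cc α with hcdef
  set B := ∑' j, |GG α j| with hBdef
  -- pointwise bound for the summands
  have hptw : ∀ n : ℕ, |kappa4 α n * Real.cos (((n : ℝ) - 1) * s)|
      ≤ b0 α ^ (α:ℝ) * ∑ j ∈ range (n+1), |GG α j| * Wc c j n := by
    intro n
    rw [kappa4_rep h1 h2 n, abs_mul, abs_mul]
    have hcos : |Real.cos (((n : ℝ) - 1) * s)| ≤ 1 := Real.abs_cos_le_one _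
    have habs0 : |b0 α ^ (α:ℝ)| = b0 α ^ (α:ℝ) := abs_of_pos hb0r
    have hsumabs : |∑ j ∈ range (n+1), GG α j * Wc c j n|
        ≤ ∑ j ∈ range (n+1), |GG α j| * Wc c j n := by
      calc |∑ j ∈ range (n+1), GG α j * Wc c j n|
          ≤ ∑ j ∈ range (n+1), |GG α j * Wc c j n| := Finset.abs_sum_le_sum_abs _ _
        _ = ∑ j ∈ range (n+1), |GG α j| * Wc c j n := by
            apply Finset.sum_congr rfl
            intro j _
            rw [abs_mul, abs_of_nonneg (Wc_nonneg hc hc1 j n)]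
    have hsnn : (0:ℝ) ≤ |∑ j ∈ range (n+1), GG α j * Wc c j n| := abs_nonneg _
    calc |b0 α ^ (α:ℝ)| * |∑ j ∈ range (n+1), GG α j * Wc c j n|
          * |Real.cos (((n : ℝ) - 1) * s)|
        ≤ |b0 α ^ (α:ℝ)| * |∑ j ∈ range (n+1), GG α j * Wc c j n| * 1 := by
          apply mul_le_mul_of_nonneg_left hcos
          positivity
      _ = |b0 α ^ (α:ℝ)| * |∑ j ∈ range (n+1), GG α j * Wc c j n| := by ring
      _ ≤ b0 α ^ (α:ℝ) * ∑ j ∈ range (n+1), |GG α j| * Wc c j n := by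
          rw [habs0]
          exact mul_le_mul_of_nonneg_left hsumabs hb0r.le
  -- the partial sums of the bound are uniformly bounded
  have hpartial : ∀ N : ℕ,
      ∑ n ∈ range N, (b0 α ^ (α:ℝ) * ∑ j ∈ range (n+1), |GG α j| * Wc c j n)
      ≤ b0 α ^ (α:ℝ) * B := by
    intro N
    rw [← Finset.mul_sum]
    apply mul_le_mul_of_nonneg_left _ hb0r.le
    calc ∑ n ∈ range N, ∑ j ∈ range (n+1), |GG α j| * Wc c j n
        ≤ ∑ n ∈ range N, ∑ j ∈ range N, |GG α j| * Wc c j n := by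
          apply Finset.sum_le_sum
          intro n hn
          apply Finset.sum_le_sum_of_subset_of_nonneg
          · exact Finset.range_subset_range.2 (by simp at hn; omega)
          · intro j _ _
            exact mul_nonneg (abs_nonneg _) (Wc_nonneg hc hc1 j n)
      _ = ∑ j ∈ range N, ∑ n ∈ range N, |GG α j| * Wc c j n := Finset.sum_comm
      _ = ∑ j ∈ range N, |GG α j| * ∑ n ∈ range N, Wc c j n := by
          apply Finset.sum_congr rfl
          intro j _
          rw [Finset.mul_sum]
      _ ≤ ∑ j ∈ range N, |GG α j| * 1 := by
          apply Finset.sum_le_sum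
          intro j _
          exact mul_le_mul_of_nonneg_left (sum_Wc_le hc hc1 j N) (abs_nonneg _)
      _ = ∑ j ∈ range N, |GG α j| := by simp
      _ ≤ B := Summable.sum_le_tsum (range N) (fun _ _ => abs_nonneg _) hGabs
  have hsummable_abs : Summable (fun n : ℕ => |kappa4 α n * Real.cos (((n : ℝ) - 1) * s)|) := by
    apply summable_of_sum_range_le (c := b0 α ^ (α:ℝ) * B) (fun n => abs_nonneg _)
    intro N
    calc ∑ n ∈ range N, |kappa4 α n * Real.cos (((n : ℝ) - 1) * s)|
        ≤ ∑ n ∈ range N, (b0 α ^ (α:ℝ) * ∑ j ∈ range (n+1), |GG α j| * Wc c j n) :=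
          Finset.sum_le_sum (fun n _ => hptw n)
      _ ≤ b0 α ^ (α:ℝ) * B := hpartial N
  refine ⟨hsummable_abs, ?_⟩
  -- the double-indexed family
  set F : ℕ → ℕ → ℝ := fun j n => GG α j * Wc c j n * Real.cos (((n : ℝ) - 1) * s) with hFdef
  -- fiberwise summability (finite support in n)
  have hWsupp : ∀ j, ∀ n ∉ range (2*j+1), Wc c j n = 0 := by
    intro j n hn
    exact Wc_zero_of_gt (by simp at hn; omega)
  have hFsupp : ∀ j, ∀ n ∉ range (2*j+1), F j n = 0 := by
    intro j n hn
    rw [hFdef]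
    simp only
    rw [hWsupp j n hn]
    ring
  have hFfiber : ∀ j, Summable (fun n => F j n) := by
    intro j
    apply summable_of_ne_finset_zero (s := range (2*j+1))
    exact hFsupp j
  have hFfiber2 : ∀ n, Summable (fun j => F j n) := by
    intro n
    apply summable_of_ne_finset_zero (s := range (n+1))
    intro j hj
    rw [hFdef]
    simp only
    rw [Wc_zero_of_lt (show n < j by simp at hj; omega)]
    ring
  -- absolute bound: ψ j := ∑' n, F j n  satisfies |ψ j| ≤ |GG α j|
  set ψ : ℕ → ℝ := fun j => ∑' n, F j n with hψdef
  have hψeq : ∀ j, ψ j = ∑ n ∈ range (2*j+1), F j n := by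
    intro j
    exact tsum_eq_sum (hFsupp j)
  have hψabs : ∀ j, |ψ j| ≤ |GG α j| := by
    intro j
    rw [hψeq]
    calc |∑ n ∈ range (2*j+1), F j n| ≤ ∑ n ∈ range (2*j+1), |F j n| :=
        Finset.abs_sum_le_sum_abs _ _
      _ ≤ ∑ n ∈ range (2*j+1), |GG α j| * Wc c j n := by
          apply Finset.sum_le_sum
          intro n _
          rw [hFdef]
          simp only
          rw [abs_mul, abs_mul, abs_of_nonneg (Wc_nonneg hc hc1 j n)]
          calc |GG α j| * Wc c j n * |Real.cos (((n : ℝ) - 1) * s)|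
              ≤ |GG α j| * Wc c j n * 1 := by
                apply mul_le_mul_of_nonneg_left (Real.abs_cos_le_one _)
                exact mul_nonneg (abs_nonneg _) (Wc_nonneg hc hc1 j n)
            _ = |GG α j| * Wc c j n := by ring
      _ = |GG α j| * ∑ n ∈ range (2*j+1), Wc c j n := by rw [Finset.mul_sum]
      _ = |GG α j| := by rw [sum_Wc hc hc1 j, mul_one]
  have hψsummable : Summable ψ := by
    apply Summable.of_norm_bounded hGabs
    intro j
    rw [Real.norm_eq_abs]
    exact hψabs j
  -- the full double family is summable
  have hF2 : Summable (Function.uncurry F) := by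
    apply Summable.of_norm_bounded (g := fun p : ℕ × ℕ => |GG α p.1| * Wc c p.1 p.2)
    · apply (summable_prod_of_nonneg ?_).2
      constructor
      · intro j
        apply summable_of_ne_finset_zero (s := range (2*j+1))
        intro n hn
        simp only
        rw [hWsupp j n hn, mul_zero]
      · refine Summable.of_nonneg_of_le (fun j => ?_) (fun j => ?_) hGabs
        · apply tsum_nonneg
          intro n
          exact mul_nonneg (abs_nonneg _) (Wc_nonneg hc hc1 j n)
        · have hts : ∑' n, |GG α j| * Wc c j n
              = ∑ n ∈ range (2*j+1), |GG α j| * Wc c j n := by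
            apply tsum_eq_sum
            intro n hn
            rw [hWsupp j n hn, mul_zero]
          rw [hts, ← Finset.mul_sum, sum_Wc hc hc1 j, mul_one]
      · intro p
        exact mul_nonneg (abs_nonneg _) (Wc_nonneg hc hc1 p.1 p.2)
    · intro p
      rw [Real.norm_eq_abs, Function.uncurry, hFdef]
      simp only
      rw [abs_mul, abs_mul, abs_of_nonneg (Wc_nonneg hc hc1 p.1 p.2)]
      calc |GG α p.1| * Wc c p.1 p.2 * |Real.cos (((p.2 : ℝ) - 1) * s)|
          ≤ |GG α p.1| * Wc c p.1 p.2 * 1 := by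
            apply mul_le_mul_of_nonneg_left (Real.abs_cos_le_one _)
            exact mul_nonneg (abs_nonneg _) (Wc_nonneg hc hc1 p.1 p.2)
        _ = |GG α p.1| * Wc c p.1 p.2 := by ring
  -- express the sum via Fubini
  have hterm : ∀ n : ℕ, kappa4 α n * Real.cos (((n : ℝ) - 1) * s)
      = b0 α ^ (α:ℝ) * ∑' j, F j n := by
    intro n
    have hts : ∑' j, F j n = ∑ j ∈ range (n+1), F j n := by
      apply tsum_eq_sum
      intro j hj
      rw [hFdef]
      simp only
      rw [Wc_zero_of_lt (show n < j by simp at hj; omega)]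
      ring
    rw [kappa4_rep h1 h2 n, hts, mul_assoc, Finset.sum_mul]
  have hswap : ∑' n : ℕ, kappa4 α n * Real.cos (((n : ℝ) - 1) * s)
      = b0 α ^ (α:ℝ) * ∑' j, ψ j := by
    calc ∑' n : ℕ, kappa4 α n * Real.cos (((n : ℝ) - 1) * s)
        = ∑' n : ℕ, (b0 α ^ (α:ℝ) * ∑' j, F j n) := by
          apply tsum_congr
          intro n
          exact hterm n
      _ = b0 α ^ (α:ℝ) * ∑' n, ∑' j, F j n := tsum_mul_left
      _ = b0 α ^ (α:ℝ) * ∑' j, ∑' n, F j n := by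
          rw [Summable.tsum_comm' hF2 hFfiber hFfiber2]
      _ = b0 α ^ (α:ℝ) * ∑' j, ψ j := rfl
  rw [hswap]
  -- bound ∑' ψ
  set φ : ℕ → ℝ := fun j => if j ≤ 1 then ψ j else GG α j with hφdef
  have hφsummable : Summable φ := by
    apply Summable.of_norm_bounded hGabs
    intro j
    rw [Real.norm_eq_abs, hφdef]
    simp only
    split
    · exact hψabs j
    · exact le_refl _
  have hψleφ : ∀ j, ψ j ≤ φ j := by
    intro j
    rw [hφdef]
    simp only
    split
    · exact le_refl _
    · rename_i hj
      have hj2 : 2 ≤ j := by omega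
      have hGnn := GG_nonneg h1 h2 j hj2
      rw [hψeq]
      calc ∑ n ∈ range (2*j+1), F j n
          ≤ ∑ n ∈ range (2*j+1), GG α j * Wc c j n := by
            apply Finset.sum_le_sum
            intro n _
            rw [hFdef]
            simp only
            have hWnn := Wc_nonneg hc hc1 j n
            have hcosle : Real.cos (((n : ℝ) - 1) * s) ≤ 1 := Real.cos_le_one _
            nlinarith [mul_nonneg hGnn hWnn]
        _ = GG α j * ∑ n ∈ range (2*j+1), Wc c j n := by rw [Finset.mul_sum]
        _ = GG α j := by rw [sum_Wc hc hc1 j, mul_one]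
  have htsum_le : ∑' j, ψ j ≤ ∑' j, φ j := hψsummable.tsum_le_tsum hψleφ hφsummable
  -- compute ∑' φ
  have hGsummable := GG_summable h1 h2
  have hG1 : Summable (fun j => GG α (j+1)) := (summable_nat_add_iff 1).2 hGsummable
  have hG2 : Summable (fun j => GG α (j+2)) := (summable_nat_add_iff 2).2 hGsummable
  have hGtail : ∑' j, GG α (j+2) = - GG α 0 - GG α 1 := by
    have e1 : ∑' j, GG α j = GG α 0 + ∑' j, GG α (j+1) := Summable.tsum_eq_zero_add hGsummable
    have e2 : ∑' j, GG α (j+1) = GG α 1 + ∑' j, GG α (j+1+1) := Summable.tsum_eq_zero_add hG1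
    have e3 : (fun j => GG α (j+1+1)) = fun j => GG α (j+2) := by
      funext j
      norm_num
    rw [e3] at e2
    have := GG_tsum_zero h1 h2
    rw [e1, e2] at this
    linarith
  have hφ1 : Summable (fun j => φ (j+1)) := (summable_nat_add_iff 1).2 hφsummable
  have hφtsum : ∑' j, φ j = ψ 0 + ψ 1 + (- GG α 0 - GG α 1) := by
    have e1 : ∑' j, φ j = φ 0 + ∑' j, φ (j+1) := Summable.tsum_eq_zero_add hφsummable
    have e2 : ∑' j, φ (j+1) = φ 1 + ∑' j, φ (j+1+1) := Summable.tsum_eq_zero_add hφ1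
    have e3 : (fun j => φ (j+1+1)) = fun j => GG α (j+2) := by
      funext j
      rw [hφdef]
      simp only
      rw [if_neg (by omega)]
    rw [e3] at e2
    have hφ0 : φ 0 = ψ 0 := by rw [hφdef]; simp
    have hφ1' : φ 1 = ψ 1 := by rw [hφdef]; simp
    rw [e1, e2, hφ0, hφ1', hGtail]
    ring
  -- compute ψ 0 and ψ 1
  have hW00 : Wc c 0 0 = 1 := by
    rw [Wc, if_pos (by omega)]
    norm_num
  have hW11 : Wc c 1 1 = 1 + c := by
    rw [Wc, if_pos (by omega)]
    norm_num
  have hW12 : Wc c 1 2 = -c := by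
    rw [Wc, if_pos (by omega)]
    norm_num
  have hW10 : Wc c 1 0 = 0 := Wc_zero_of_lt (by omega)
  have hψ0 : ψ 0 = GG α 0 * Real.cos s := by
    rw [hψeq, show 2*0+1 = 1 from rfl, Finset.sum_range_one]
    rw [hFdef]
    simp only
    rw [hW00]
    rw [show (((0:ℕ):ℝ) - 1) * s = -s by push_cast; ring, Real.cos_neg]
    ring
  have hψ1 : ψ 1 = GG α 1 * ((1+c) + (-c) * Real.cos s) := by
    rw [hψeq, show 2*1+1 = 3 from rfl]
    rw [Finset.sum_range_succ, Finset.sum_range_succ, Finset.sum_range_one]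
    rw [hFdef]
    simp only
    rw [hW10, hW11, hW12]
    rw [show (((1:ℕ):ℝ) - 1) * s = 0 by push_cast; ring, Real.cos_zero]
    rw [show (((2:ℕ):ℝ) - 1) * s = s by push_cast; ring]
    ring
  -- final computation
  have hhead := GG_head_nonneg h1 h2
  have hcos1 : Real.cos s - 1 ≤ 0 := by linarith [Real.cos_le_one s]
  have hfinal : ψ 0 + ψ 1 + (- GG α 0 - GG α 1)
      = (GG α 0 - c * GG α 1) * (Real.cos s - 1) := by
    rw [hψ0, hψ1]
    ring
  have : ∑' j, φ j ≤ 0 := by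
    rw [hφtsum, hfinal]
    apply mul_nonpos_of_nonneg_of_nonpos _ hcos1
    rw [hcdef]
    exact hhead
  have hle : ∑' j, ψ j ≤ 0 := le_trans htsum_le this
  calc b0 α ^ (α:ℝ) * ∑' j, ψ j ≤ b0 α ^ (α:ℝ) * 0 := by
        exact mul_le_mul_of_nonneg_left hle hb0r.le
    _ = 0 := by ring
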